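/- arXiv:1703.02778 — 3 statements merged into one kernel-verified Lean document; each statement's English description precedes it below -/
import Mathlib

section
/- Let a, b ∈ ℝ^d with aᵢ < bᵢ for all i, let Ω = ∏ᵢ (aᵢ, bᵢ) be the open box and K = ∏ᵢ [aᵢ, bᵢ] the closed box. Let α, β > 0, let c : ℝ → ℝ be continuous with c ≥ 0, and let d : ℝ → ℝ be continuously differentiable. Let U be an open set containing K and let S : ℝ × U → ℝ be twice continuously differentiable (jointly in (t,x)), satisfying c(|∇ₓS(t,x)|) ∂_t S(t,x) = α ΔₓS(t,x) − β d'(S(t,x)) for all t ∈ ℝ and x ∈ K, and the Neumann condition ∂ᵢS(t,x) = 0 whenever x ∈ K satisfies xᵢ = aᵢ or xᵢ = bᵢ. Then t ↦ E(S(t,·)) is differentiable with derivative d/dt E(S(t,·)) = − ∫_Ω c(|∇ₓS(t,x)|) |∂_t S(t,x)|² dx ≤ 0; in particular the energy is nonincreasing in t. -/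
/-! Differentiating under the integral sign, which is legitimate because every integrand is
continuous on the compact box, gives `dE/dt = ∫_Ω α ⟪∇S, ∇∂ₜS⟫ + β d'(S) ∂ₜS`; here `∂ₜ∇S = ∇∂ₜS`
by the symmetry of the second derivative of `S`. The divergence theorem applied to the field
`∂ₜS ∇S`, whose normal component vanishes on the faces by the Neumann condition, is Green's identity
`∫_Ω ⟪∇S, ∇∂ₜS⟫ = -∫_Ω ∂ₜS ΔS`. Hence `dE/dt = -∫_Ω ∂ₜS (α ΔS - β d'(S)) = -∫_Ω c(|∇S|) (∂ₜS)²`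
by the equation, and this is `≤ 0` because `c ≥ 0`. -/

open MeasureTheory Set
open scoped RealInnerProductSpace

noncomputable def laplacian {n : ℕ} (f : EuclideanSpace ℝ (Fin n) → ℝ)
    (x : EuclideanSpace ℝ (Fin n)) : ℝ :=
  ∑ i, fderiv ℝ (fun y => fderiv ℝ f y (EuclideanSpace.single i 1)) x (EuclideanSpace.single i 1)

/-- The free energy `E(S) = ∫_Ω (α/2)|∇S|² + β d(S) dx`. -/
noncomputable def energy {n : ℕ} (Ω : Set (EuclideanSpace ℝ (Fin n))) (α β : ℝ)
    (d : ℝ → ℝ) (S : EuclideanSpace ℝ (Fin n) → ℝ) : ℝ :=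
  ∫ x in Ω, (α / 2 * ‖gradient S x‖ ^ 2 + β * d (S x))

open Filter Topology

section PartialDerivatives

variable {E G : Type*} [NormedAddCommGroup E] [NormedSpace ℝ E] [NormedAddCommGroup G]
  [NormedSpace ℝ G] {f : ℝ × E → G} {f' : ℝ × E →L[ℝ] G} {t : ℝ} {x : E}

theorem HasFDerivAt.hasDerivAt_partial_fst (hf : HasFDerivAt f f' (t, x)) :
    HasDerivAt (fun s => f (s, x)) (f' (1, 0)) t :=
  hf.comp_hasDerivAt t ((hasDerivAt_id t).prodMk (hasDerivAt_const t x))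

theorem HasFDerivAt.hasFDerivAt_partial_snd (hf : HasFDerivAt f f' (t, x)) :
    HasFDerivAt (fun y => f (t, y)) (f'.comp (.inr ℝ ℝ E)) x :=
  hf.comp x (hasFDerivAt_prodMk_right t x)

theorem deriv_partial_fst_eq (hf : DifferentiableAt ℝ f (t, x)) :
    deriv (fun s => f (s, x)) t = fderiv ℝ f (t, x) (1, 0) :=
  hf.hasFDerivAt.hasDerivAt_partial_fst.deriv

theorem fderiv_partial_snd_eq (hf : DifferentiableAt ℝ f (t, x)) :
    fderiv ℝ (fun y => f (t, y)) x = (fderiv ℝ f (t, x)).comp (.inr ℝ ℝ E) :=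
  hf.hasFDerivAt.hasFDerivAt_partial_snd.fderiv

variable {V : Set (ℝ × E)} {m n : WithTop ℕ∞}

theorem ContDiffOn.contDiffOn_deriv_partial_fst (hf : ContDiffOn ℝ n f V) (hV : IsOpen V)
    (hmn : m + 1 ≤ n) : ContDiffOn ℝ m (fun p => deriv (fun s => f (s, p.2)) p.1) V :=
  ((hf.fderiv_of_isOpen hV hmn).clm_apply contDiffOn_const).congr fun _ hp =>
    deriv_partial_fst_eq ((hf.differentiableOn (zero_lt_one.trans_le (le_add_self.trans hmn)).ne')
      |>.differentiableAt (hV.mem_nhds hp))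

theorem ContDiffOn.contDiffOn_fderiv_partial_snd (hf : ContDiffOn ℝ n f V) (hV : IsOpen V)
    (hmn : m + 1 ≤ n) : ContDiffOn ℝ m (fun p => fderiv ℝ (fun y => f (p.1, y)) p.2) V :=
  ((hf.fderiv_of_isOpen hV hmn).clm_comp contDiffOn_const).congr fun _ hp =>
    fderiv_partial_snd_eq ((hf.differentiableOn (zero_lt_one.trans_le (le_add_self.trans hmn)).ne')
      |>.differentiableAt (hV.mem_nhds hp))

theorem ContDiffOn.hasDerivAt_fderiv_partial_snd (hf : ContDiffOn ℝ 2 f V) (hV : IsOpen V)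
    (hp : (t, x) ∈ V) :
    HasDerivAt (fun s => fderiv ℝ (fun y => f (s, y)) x)
      (fderiv ℝ (fun y => deriv (fun s => f (s, y)) t) x) t := by
  have hdiff : DifferentiableOn ℝ f V := hf.differentiableOn two_ne_zero
  have hf2 : HasFDerivAt (fderiv ℝ f) (fderiv ℝ (fderiv ℝ f) (t, x)) (t, x) :=
    (((hf.fderiv_of_isOpen hV (m := 1) le_rfl).differentiableOn one_ne_zero).differentiableAt
      (hV.mem_nhds hp)).hasFDerivAt
  have hsymm : IsSymmSndFDerivAt ℝ f (t, x) :=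
    (hf.contDiffAt (hV.mem_nhds hp)).isSymmSndFDerivAt (by simp)
  have hslice : (fun s => fderiv ℝ (fun y => f (s, y)) x) =ᶠ[𝓝 t]
      fun s => (fderiv ℝ f (s, x)).comp (.inr ℝ ℝ E) := by
    filter_upwards [(continuous_id.prodMk continuous_const).continuousAt.preimage_mem_nhds
      (hV.mem_nhds hp)] with s hs
    exact fderiv_partial_snd_eq (hdiff.differentiableAt (hV.mem_nhds hs))
  have htime : (fun y => deriv (fun s => f (s, y)) t) =ᶠ[𝓝 x]
      fun y => fderiv ℝ f (t, y) (1, 0) := by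
    filter_upwards [(continuous_const.prodMk continuous_id).continuousAt.preimage_mem_nhds
      (hV.mem_nhds hp)] with y hy
    exact deriv_partial_fst_eq (hdiff.differentiableAt (hV.mem_nhds hy))
  have hmixed : fderiv ℝ (fun y => deriv (fun s => f (s, y)) t) x
      = (fderiv ℝ (fderiv ℝ f) (t, x) (1, 0)).comp (.inr ℝ ℝ E) := by
    rw [htime.fderiv_eq,
      (hf2.hasFDerivAt_partial_snd.clm_apply (hasFDerivAt_const (1, 0) x)).fderiv]
    ext w
    simpa using hsymm.eq (0, w) (1, 0)
  rw [hmixed]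
  refine HasDerivAt.congr_of_eventuallyEq ?_ hslice
  simpa using hf2.hasDerivAt_partial_fst.clm_comp (hasDerivAt_const t (.inr ℝ ℝ E))

end PartialDerivatives

section Gradient

variable {E : Type*} [NormedAddCommGroup E] [InnerProductSpace ℝ E] [CompleteSpace E]

theorem ContDiffOn.continuousOn_gradient {f : E → ℝ} {U : Set E} (hf : ContDiffOn ℝ 1 f U)
    (hU : IsOpen U) : ContinuousOn (gradient f) U :=
  (InnerProductSpace.toDual ℝ E).symm.continuous.comp_continuousOn
    (hf.continuousOn_fderiv_of_isOpen hU le_rfl)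

variable {V : Set (ℝ × E)} {f : ℝ × E → ℝ}

theorem ContDiffOn.continuousOn_gradient_partial_snd (hf : ContDiffOn ℝ 1 f V) (hV : IsOpen V) :
    ContinuousOn (fun p => gradient (fun y => f (p.1, y)) p.2) V :=
  (InnerProductSpace.toDual ℝ E).symm.continuous.comp_continuousOn
    (hf.contDiffOn_fderiv_partial_snd hV (m := 0) (by norm_num)).continuousOn

theorem ContDiffOn.hasDerivAt_gradient_partial_snd (hf : ContDiffOn ℝ 2 f V) (hV : IsOpen V)
    {t : ℝ} {x : E} (hp : (t, x) ∈ V) :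
    HasDerivAt (fun s => gradient (fun y => f (s, y)) x)
      (gradient (fun y => deriv (fun s => f (s, y)) t) x) t :=
  (InnerProductSpace.toDual ℝ E).symm.toContinuousLinearEquiv.hasFDerivAt.comp_hasDerivAt t
    (hf.hasDerivAt_fderiv_partial_snd hV hp)

end Gradient

section Laplacian

variable {n : ℕ}

theorem EuclideanSpace.gradient_apply (f : EuclideanSpace ℝ (Fin n) → ℝ)
    (x : EuclideanSpace ℝ (Fin n)) (i : Fin n) :
    gradient f x i = fderiv ℝ f x (EuclideanSpace.single i 1) := by
  rw [← inner_gradient_left, EuclideanSpace.inner_single_right]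
  simp

theorem laplacian_eq_sum_fderiv_fderiv {f : EuclideanSpace ℝ (Fin n) → ℝ}
    {x : EuclideanSpace ℝ (Fin n)} (hf : DifferentiableAt ℝ (fderiv ℝ f) x) :
    laplacian f x = ∑ i, fderiv ℝ (fderiv ℝ f) x (EuclideanSpace.single i 1)
      (EuclideanSpace.single i 1) := by
  simp [laplacian, fderiv_clm_apply hf (differentiableAt_const _)]

variable {U : Set (EuclideanSpace ℝ (Fin n))}

theorem ContDiffOn.continuousOn_laplacian {f : EuclideanSpace ℝ (Fin n) → ℝ}
    (hf : ContDiffOn ℝ 2 f U) (hU : IsOpen U) : ContinuousOn (laplacian f) U := by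
  have hf' : ContDiffOn ℝ 1 (fderiv ℝ f) U := hf.fderiv_of_isOpen hU le_rfl
  have hf'' := hf'.continuousOn_fderiv_of_isOpen hU le_rfl
  refine (continuousOn_finsetSum Finset.univ fun i _ =>
    (hf''.clm_apply (continuousOn_const (c := EuclideanSpace.single i 1))).clm_apply
      (continuousOn_const (c := EuclideanSpace.single i 1))).congr fun x hx => ?_
  exact laplacian_eq_sum_fderiv_fderiv
    ((hf'.differentiableOn one_ne_zero).differentiableAt (hU.mem_nhds hx))

theorem continuousOn_inner_gradient_add_mul_laplacian (hU : IsOpen U)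
    {f g : EuclideanSpace ℝ (Fin n) → ℝ} (hf : ContDiffOn ℝ 1 f U) (hg : ContDiffOn ℝ 2 g U) :
    ContinuousOn (fun x => ⟪gradient g x, gradient f x⟫ + f x * laplacian g x) U :=
  ((hg.of_le one_le_two).continuousOn_gradient hU |>.inner (hf.continuousOn_gradient hU)).add
    (hf.continuousOn.mul (hg.continuousOn_laplacian hU))

end Laplacian

section DifferentiationUnderIntegral

variable {X E : Type*} [TopologicalSpace X] [T2Space X] [SecondCountableTopology X]
  [MeasurableSpace X] [OpensMeasurableSpace X] {μ : Measure X} [IsFiniteMeasureOnCompacts μ]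
  [NormedAddCommGroup E] [NormedSpace ℝ E]

theorem hasDerivAt_setIntegral_of_continuousOn {K Ω : Set X} (hK : IsCompact K)
    (hΩ : MeasurableSet Ω) (hΩK : Ω ⊆ K) {F F' : ℝ → X → E} (hF : ∀ s, ContinuousOn (F s) K)
    (hF' : ContinuousOn (Function.uncurry F') (univ ×ˢ K))
    (hderiv : ∀ s, ∀ x ∈ Ω, HasDerivAt (F · x) (F' s x) s) (t : ℝ) :
    HasDerivAt (fun s => ∫ x in Ω, F s x ∂μ) (∫ x in Ω, F' t x ∂μ) t := by
  obtain ⟨M, hM⟩ := (isCompact_Icc.prod hK).exists_bound_of_continuousOn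
    (hF'.mono (prod_mono (subset_univ (Icc (t - 1) (t + 1))) subset_rfl))
  refine (hasDerivAt_integral_of_dominated_loc_of_deriv_le (bound := fun _ => M)
    (Metric.ball_mem_nhds t one_pos)
    (Eventually.of_forall fun s => ((hF s).mono hΩK).aestronglyMeasurable hΩ)
    (((hF t).integrableOn_compact hK).mono_set hΩK)
    (((hF'.uncurry_left t (mem_univ t)).mono hΩK).aestronglyMeasurable hΩ)
    ?_ (integrableOn_const ((measure_mono hΩK).trans_lt hK.measure_lt_top).ne)
    (ae_restrict_of_forall_mem hΩ fun x hx s _ => hderiv s x hx)).2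
  refine ae_restrict_of_forall_mem hΩ fun x hx s hs => hM (s, x) ⟨?_, hΩK hx⟩
  rw [Real.ball_eq_Ioo] at hs
  exact Ioo_subset_Icc_self hs

end DifferentiationUnderIntegral

section EuclideanBox

variable {n : ℕ}

def openBox (a b : Fin n → ℝ) : Set (EuclideanSpace ℝ (Fin n)) :=
  {x | ∀ i, x i ∈ Ioo (a i) (b i)}

def closedBox (a b : Fin n → ℝ) : Set (EuclideanSpace ℝ (Fin n)) :=
  {x | ∀ i, x i ∈ Icc (a i) (b i)}

variable (a b : Fin n → ℝ)

theorem openBox_eq_preimage :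
    openBox a b = WithLp.ofLp ⁻¹' pi univ fun i => Ioo (a i) (b i) := by
  ext x
  simp [openBox]

theorem closedBox_eq_preimage : closedBox a b = WithLp.ofLp ⁻¹' Icc a b := by
  ext x
  simp [closedBox, Pi.le_def, forall_and]

theorem openBox_subset_closedBox : openBox a b ⊆ closedBox a b :=
  fun _ hx i => Ioo_subset_Icc_self (hx i)

theorem isOpen_openBox : IsOpen (openBox a b) := by
  rw [openBox_eq_preimage]
  exact (isOpen_set_pi finite_univ fun i _ => isOpen_Ioo).preimage (PiLp.continuous_ofLp 2 _)

theorem isCompact_closedBox : IsCompact (closedBox a b) := by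
  rw [closedBox_eq_preimage]
  exact (EuclideanSpace.equiv (Fin n) ℝ).toHomeomorph.isCompact_preimage.2 isCompact_Icc

theorem openBox_ae_eq_closedBox : openBox a b =ᵐ[volume] closedBox a b := by
  rw [openBox_eq_preimage, closedBox_eq_preimage]
  refine (PiLp.volume_preserving_ofLp (Fin n)).quasiMeasurePreserving.preimage_ae_eq ?_
  rw [volume_pi]
  exact Measure.univ_pi_Ioo_ae_eq_Icc

theorem integral_divergence_eq_zero_of_closedBox (hab : a ≤ b)
    {φ : Fin n → EuclideanSpace ℝ (Fin n) → ℝ}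
    {φ' : Fin n → EuclideanSpace ℝ (Fin n) → EuclideanSpace ℝ (Fin n) →L[ℝ] ℝ}
    (hφ : ∀ i, ContinuousOn (φ i) (closedBox a b))
    (hφ' : ∀ x ∈ openBox a b, ∀ i, HasFDerivAt (φ i) (φ' i x) x)
    (hint : IntegrableOn (fun x => ∑ i, φ' i x (EuclideanSpace.single i 1)) (closedBox a b))
    (hface : ∀ x ∈ closedBox a b, ∀ i, (x i = a i ∨ x i = b i) → φ i x = 0) :
    ∫ x in openBox a b, ∑ i, φ' i x (EuclideanSpace.single i 1) = 0 := by
  cases n with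
  | zero => simp
  | succ n =>
    set e := (EuclideanSpace.equiv (Fin (n + 1)) ℝ).symm
    have hvol := EuclideanSpace.volume_preserving_symm_measurableEquiv_toLp (Fin (n + 1))
    have hemb := (MeasurableEquiv.toLp 2 (Fin (n + 1) → ℝ)).symm.measurableEmbedding
    set div := fun x => ∑ i, φ' i x (EuclideanSpace.single i 1)
    have hmem : ∀ y, e y ∈ closedBox a b ↔ y ∈ Icc a b := fun y => by
      rw [closedBox_eq_preimage]
      rfl
    have hdiv := integral_divergence_of_hasFDerivAt_off_countable' a b hab
      (fun i y => φ i (e y)) (fun i y => (φ' i (e y)).comp (e : (Fin (n + 1) → ℝ) →L[ℝ] _))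
      ∅ countable_empty (fun i => (hφ i).comp e.continuous.continuousOn fun y hy => (hmem y).2 hy)
      (fun y hy i => (hφ' (e y) (by rw [openBox_eq_preimage]; exact hy.1) i).comp y
        e.hasFDerivAt)
      (by
        rw [closedBox_eq_preimage] at hint
        exact (hvol.integrableOn_comp_preimage hemb).1 hint)
    have hzero : ∀ i, ∀ c ∈ ({a i, b i} : Set ℝ),
        ∫ y in Icc (a ∘ i.succAbove) (b ∘ i.succAbove), φ i (e (i.insertNth c y)) = 0 := by
      intro i c hc
      refine setIntegral_eq_zero_of_forall_eq_zero fun y hy => hface _ ?_ i ?_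
      · rw [hmem, Fin.insertNth_mem_Icc]
        exact ⟨by rcases hc with rfl | rfl <;> simp [hab i], hy⟩
      · simpa [e] using hc
    calc ∫ x in openBox a b, div x
        = ∫ x in closedBox a b, div x := setIntegral_congr_set (openBox_ae_eq_closedBox a b)
      _ = ∫ y in Icc a b, div (e y) := by
        rw [closedBox_eq_preimage, ← hvol.setIntegral_preimage_emb hemb]
        rfl
      _ = 0 := by
        refine hdiv.trans (Finset.sum_eq_zero fun i _ => ?_)
        rw [hzero i (b i) (by simp), hzero i (a i) (by simp), sub_zero]

theorem integral_inner_gradient_add_mul_laplacian_eq_zero (hab : a ≤ b)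
    {U : Set (EuclideanSpace ℝ (Fin n))} (hU : IsOpen U) (hKU : closedBox a b ⊆ U)
    {f g : EuclideanSpace ℝ (Fin n) → ℝ} (hf : ContDiffOn ℝ 1 f U) (hg : ContDiffOn ℝ 2 g U)
    (hneumann : ∀ x ∈ closedBox a b, ∀ i, (x i = a i ∨ x i = b i) → gradient g x i = 0) :
    ∫ x in openBox a b, (⟪gradient g x, gradient f x⟫ + f x * laplacian g x) = 0 := by
  have hg' : ContDiffOn ℝ 1 (fderiv ℝ g) U := hg.fderiv_of_isOpen hU le_rfl
  have hdf : ∀ x ∈ U, HasFDerivAt f (fderiv ℝ f x) x := fun x hx =>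
    ((hf.differentiableOn one_ne_zero).differentiableAt (hU.mem_nhds hx)).hasFDerivAt
  have hdg' : ∀ x ∈ U, HasFDerivAt (fderiv ℝ g) (fderiv ℝ (fderiv ℝ g) x) x := fun x hx =>
    ((hg'.differentiableOn one_ne_zero).differentiableAt (hU.mem_nhds hx)).hasFDerivAt
  let flux' : Fin n → EuclideanSpace ℝ (Fin n) → EuclideanSpace ℝ (Fin n) →L[ℝ] ℝ := fun i x =>
    f x • (fderiv ℝ (fderiv ℝ g) x).flip (EuclideanSpace.single i 1)
      + fderiv ℝ g x (EuclideanSpace.single i 1) • fderiv ℝ f x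
  have hflux : ∀ x ∈ U, ∀ i, HasFDerivAt
      (fun y => f y * fderiv ℝ g y (EuclideanSpace.single i 1)) (flux' i x) x := fun x hx i =>
    ((hdf x hx).mul ((hdg' x hx).clm_apply (hasFDerivAt_const _ x))).congr_fderiv (by simp [flux'])
  have hdiv : ∀ x ∈ U, ∑ i, flux' i x (EuclideanSpace.single i 1)
      = ⟪gradient g x, gradient f x⟫ + f x * laplacian g x := by
    intro x hx
    rw [laplacian_eq_sum_fderiv_fderiv (hdg' x hx).differentiableAt]
    rw [PiLp.inner_apply, Finset.mul_sum, ← Finset.sum_add_distrib]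
    refine Finset.sum_congr rfl fun i _ => ?_
    simp only [flux', EuclideanSpace.gradient_apply, add_apply, smul_apply,
      ContinuousLinearMap.flip_apply, smul_eq_mul, Real.inner_apply]
    ring
  have hcont := continuousOn_inner_gradient_add_mul_laplacian hU hf hg
  rw [← integral_divergence_eq_zero_of_closedBox a b hab
    (fun i x hx => (hflux x (hKU hx) i).continuousAt.continuousWithinAt)
    (fun x hx i => hflux x (hKU (openBox_subset_closedBox a b hx)) i)
    ((hcont.mono hKU).integrableOn_compact (isCompact_closedBox a b) |>.congr_fun
      (fun x hx => (hdiv x (hKU hx)).symm) (isCompact_closedBox a b).measurableSet)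
    (fun x hx i hi => by simp [← EuclideanSpace.gradient_apply, hneumann x hx i hi])]
  exact setIntegral_congr_fun (isOpen_openBox a b).measurableSet fun x hx =>
    (hdiv x (hKU (openBox_subset_closedBox a b hx))).symm

end EuclideanBox

section EnergyRate

variable {E : Type*} [NormedAddCommGroup E] [InnerProductSpace ℝ E] [CompleteSpace E]

noncomputable def energyDensityRate (α β : ℝ) (d : ℝ → ℝ) (S : ℝ → E → ℝ) (t : ℝ) (x : E) : ℝ :=
  α * ⟪gradient (S t) x, gradient (fun y => deriv (fun s => S s y) t) x⟫
    + β * (deriv d (S t x) * deriv (fun s => S s x) t)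

variable {U : Set E} {S : ℝ → E → ℝ} (α β : ℝ) {d : ℝ → ℝ}

theorem hasDerivAt_energy_density
    (hS : ContDiffOn ℝ 2 (fun p : ℝ × E => S p.1 p.2) (univ ×ˢ U)) (hU : IsOpen U)
    (hd : Differentiable ℝ d) {x : E} (hx : x ∈ U) (t : ℝ) :
    HasDerivAt (fun s => α / 2 * ‖gradient (S s) x‖ ^ 2 + β * d (S s x))
      (energyDensityRate α β d S t x) t := by
  have hV : IsOpen ((univ : Set ℝ) ×ˢ U) := isOpen_univ.prod hU
  have htime : HasDerivAt (fun s => S s x) (deriv (fun s => S s x) t) t :=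
    ((hS.differentiableOn two_ne_zero).differentiableAt (hV.mem_nhds ⟨trivial, hx⟩))
      |>.hasFDerivAt.hasDerivAt_partial_fst.differentiableAt.hasDerivAt
  refine (((hS.hasDerivAt_gradient_partial_snd hV ⟨trivial, hx⟩).norm_sq.const_mul (α / 2)).add
    (((hd _).hasDerivAt.comp t htime).const_mul β)).congr_deriv ?_
  simp only [energyDensityRate]
  ring

theorem continuousOn_energyDensityRate
    (hS : ContDiffOn ℝ 2 (fun p : ℝ × E => S p.1 p.2) (univ ×ˢ U)) (hU : IsOpen U)
    (hd : ContDiff ℝ 1 d) :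
    ContinuousOn (Function.uncurry (energyDensityRate α β d S)) (univ ×ˢ U) := by
  have hV : IsOpen ((univ : Set ℝ) ×ˢ U) := isOpen_univ.prod hU
  have htime := hS.contDiffOn_deriv_partial_fst hV (m := 1) le_rfl
  exact (continuousOn_const.mul ((hS.of_le one_le_two).continuousOn_gradient_partial_snd hV
    |>.inner (htime.continuousOn_gradient_partial_snd hV))).add (continuousOn_const.mul
      (((hd.continuous_deriv le_rfl).comp_continuousOn hS.continuousOn).mul htime.continuousOn))

end EnergyRate

theorem hasDerivAt_energy {n : ℕ} {U K Ω : Set (EuclideanSpace ℝ (Fin n))}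
    {S : ℝ → EuclideanSpace ℝ (Fin n) → ℝ} (α β : ℝ) {d : ℝ → ℝ}
    (hS : ContDiffOn ℝ 2 (fun p : ℝ × EuclideanSpace ℝ (Fin n) => S p.1 p.2) (univ ×ˢ U))
    (hU : IsOpen U) (hd : ContDiff ℝ 1 d) (hK : IsCompact K) (hKU : K ⊆ U)
    (hΩ : MeasurableSet Ω) (hΩK : Ω ⊆ K) (t : ℝ) :
    HasDerivAt (fun s => energy Ω α β d (S s)) (∫ x in Ω, energyDensityRate α β d S t x) t := by
  refine hasDerivAt_setIntegral_of_continuousOn hK hΩ hΩK (fun s => ?_)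
    ((continuousOn_energyDensityRate α β hS hU hd).mono (prod_mono subset_rfl hKU))
    (fun s x hx => hasDerivAt_energy_density α β hS hU (hd.differentiable one_ne_zero)
      (hKU (hΩK hx)) s) t
  have hV : IsOpen ((univ : Set ℝ) ×ˢ U) := isOpen_univ.prod hU
  have hgrad := (hS.of_le one_le_two).continuousOn_gradient_partial_snd hV
    |>.uncurry_left (f := fun s x => gradient (S s) x) s (mem_univ s)
  have hSs := hS.continuousOn.uncurry_left (f := S) s (mem_univ s)
  exact ((continuousOn_const.mul (hgrad.norm.pow 2)).add
    (continuousOn_const.mul (hd.continuous.comp_continuousOn hSs))).mono hKU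

theorem integral_energyDensityRate_eq_neg_dissipation {n : ℕ} {a b : Fin n → ℝ} (hab : a ≤ b)
    {U : Set (EuclideanSpace ℝ (Fin n))} (hU : IsOpen U) (hKU : closedBox a b ⊆ U)
    {S : ℝ → EuclideanSpace ℝ (Fin n) → ℝ}
    (hS : ContDiffOn ℝ 2 (fun p : ℝ × EuclideanSpace ℝ (Fin n) => S p.1 p.2) (univ ×ˢ U))
    {α β : ℝ} {c d : ℝ → ℝ} (hd : ContDiff ℝ 1 d) (t : ℝ)
    (hpde : ∀ x ∈ closedBox a b, c ‖gradient (S t) x‖ * deriv (fun s => S s x) t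
      = α * laplacian (S t) x - β * deriv d (S t x))
    (hneumann : ∀ x ∈ closedBox a b, ∀ i, (x i = a i ∨ x i = b i) → gradient (S t) x i = 0) :
    ∫ x in openBox a b, energyDensityRate α β d S t x
      = -∫ x in openBox a b, c ‖gradient (S t) x‖ * deriv (fun s => S s x) t ^ 2 := by
  have hV : IsOpen ((univ : Set ℝ) ×ˢ U) := isOpen_univ.prod hU
  have hslice : ContDiffOn ℝ 2 (fun y => (t, y)) U := contDiffOn_const.prodMk contDiffOn_id
  have hu : ContDiffOn ℝ 1 (fun y => deriv (fun s => S s y) t) U :=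
    (hS.contDiffOn_deriv_partial_fst hV le_rfl).comp (hslice.of_le one_le_two)
      fun y hy => ⟨trivial, hy⟩
  have hSt : ContDiffOn ℝ 2 (S t) U := hS.comp hslice fun y hy => ⟨trivial, hy⟩
  have hint : ∀ h : EuclideanSpace ℝ (Fin n) → ℝ, ContinuousOn h U → IntegrableOn h (openBox a b) :=
    fun h hh => ((hh.mono hKU).integrableOn_compact (isCompact_closedBox a b)).mono_set
      (openBox_subset_closedBox a b)
  have hrate := (continuousOn_energyDensityRate α β hS hU hd).uncurry_left t (mem_univ t)
  have hgreen := integral_inner_gradient_add_mul_laplacian_eq_zero a b hab hU hKU hu hSt hneumann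
  have hsplit := integral_sub (hint _ hrate)
    ((hint _ (continuousOn_inner_gradient_add_mul_laplacian hU hu hSt)).const_mul α)
  rw [integral_const_mul, hgreen, mul_zero, sub_zero] at hsplit
  rw [← hsplit, ← integral_neg]
  refine setIntegral_congr_fun (isOpen_openBox a b).measurableSet fun x hx => ?_
  simp only [energyDensityRate]
  linear_combination deriv (fun s => S s x) t * hpde x (openBox_subset_closedBox a b hx)

theorem energy_decay_neumann_box_general
    {n : ℕ} (a b : Fin n → ℝ) (hab : ∀ i, a i < b i)
    (Ω : Set (EuclideanSpace ℝ (Fin n)))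
    (hΩ : Ω = {x : EuclideanSpace ℝ (Fin n) | ∀ i, x i ∈ Ioo (a i) (b i)})
    (K : Set (EuclideanSpace ℝ (Fin n)))
    (hK : K = {x : EuclideanSpace ℝ (Fin n) | ∀ i, x i ∈ Icc (a i) (b i)})
    (α β : ℝ)
    (c : ℝ → ℝ) (hcnn : ∀ x, 0 ≤ c x)
    (d : ℝ → ℝ) (hd : ContDiff ℝ 1 d)
    (U : Set (EuclideanSpace ℝ (Fin n))) (hU : IsOpen U) (hKU : K ⊆ U)
    (S : ℝ → EuclideanSpace ℝ (Fin n) → ℝ)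
    (hS : ContDiffOn ℝ 2 (fun p : ℝ × EuclideanSpace ℝ (Fin n) => S p.1 p.2)
      (Set.univ ×ˢ U))
    (hpde : ∀ t : ℝ, ∀ x ∈ K,
      c ‖gradient (S t) x‖ * deriv (fun s => S s x) t
        = α * laplacian (S t) x - β * deriv d (S t x))
    (hneumann : ∀ t : ℝ, ∀ x ∈ K, ∀ i : Fin n,
      (x i = a i ∨ x i = b i) → gradient (S t) x i = 0) :
    (∀ t : ℝ, HasDerivAt (fun s => energy Ω α β d (S s))
        (-∫ x in Ω, c ‖gradient (S t) x‖ * (deriv (fun s => S s x) t) ^ 2) t ∧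
      -∫ x in Ω, c ‖gradient (S t) x‖ * (deriv (fun s => S s x) t) ^ 2 ≤ 0) ∧
    Antitone (fun t => energy Ω α β d (S t)) := by
  obtain rfl : Ω = openBox a b := hΩ
  obtain rfl : K = closedBox a b := hK
  have hderiv : ∀ t, HasDerivAt (fun s => energy (openBox a b) α β d (S s))
      (-∫ x in openBox a b, c ‖gradient (S t) x‖ * (deriv (fun s => S s x) t) ^ 2) t := fun t =>
    integral_energyDensityRate_eq_neg_dissipation (fun i => (hab i).le) hU hKU hS hd t (hpde t)
      (hneumann t) ▸ hasDerivAt_energy α β hS hU hd (isCompact_closedBox a b) hKU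
        (isOpen_openBox a b).measurableSet (openBox_subset_closedBox a b) t
  have hnonpos : ∀ t, -∫ x in openBox a b, c ‖gradient (S t) x‖ * (deriv (fun s => S s x) t) ^ 2
      ≤ 0 := fun t => neg_nonpos.2 <| setIntegral_nonneg (isOpen_openBox a b).measurableSet
        fun x _ => mul_nonneg (hcnn _) (sq_nonneg _)
  exact ⟨fun t => ⟨hderiv t, hnonpos t⟩, antitone_of_deriv_nonpos
    (fun t => (hderiv t).differentiableAt) fun t => (hderiv t).deriv ▸ hnonpos t⟩

/-- energy decay, Lemma 2.2, on a box with Neumann boundary conditions: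
for a smooth solution of `c(|∇S|) ∂ₜS = α ΔS − β d'(S)` on the closed box `K` with
vanishing normal derivative on the faces, the energy `t ↦ E(S(t,·))` is differentiable with
derivative `−∫_Ω c(|∇S|)|∂ₜS|² dx ≤ 0`; in particular the energy is nonincreasing. -/
theorem energy_decay_neumann_box
    {n : ℕ} (a b : Fin n → ℝ) (hab : ∀ i, a i < b i)
    (Ω : Set (EuclideanSpace ℝ (Fin n)))
    (hΩ : Ω = {x : EuclideanSpace ℝ (Fin n) | ∀ i, x i ∈ Ioo (a i) (b i)})
    (K : Set (EuclideanSpace ℝ (Fin n)))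
    (hK : K = {x : EuclideanSpace ℝ (Fin n) | ∀ i, x i ∈ Icc (a i) (b i)})
    (α β : ℝ) (hα : 0 < α) (hβ : 0 < β)
    (c : ℝ → ℝ) (hc : Continuous c) (hcnn : ∀ x, 0 ≤ c x)
    (d : ℝ → ℝ) (hd : ContDiff ℝ 1 d)
    (U : Set (EuclideanSpace ℝ (Fin n))) (hU : IsOpen U) (hKU : K ⊆ U)
    (S : ℝ → EuclideanSpace ℝ (Fin n) → ℝ)
    (hS : ContDiffOn ℝ 2 (fun p : ℝ × EuclideanSpace ℝ (Fin n) => S p.1 p.2)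
      (Set.univ ×ˢ U))
    (hpde : ∀ t : ℝ, ∀ x ∈ K,
      c ‖gradient (S t) x‖ * deriv (fun s => S s x) t
        = α * laplacian (S t) x - β * deriv d (S t x))
    (hneumann : ∀ t : ℝ, ∀ x ∈ K, ∀ i : Fin n,
      (x i = a i ∨ x i = b i) → gradient (S t) x i = 0) :
    (∀ t : ℝ, HasDerivAt (fun s => energy Ω α β d (S s))
        (-∫ x in Ω, c ‖gradient (S t) x‖ * (deriv (fun s => S s x) t) ^ 2) t ∧
      -∫ x in Ω, c ‖gradient (S t) x‖ * (deriv (fun s => S s x) t) ^ 2 ≤ 0) ∧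
    Antitone (fun t => energy Ω α β d (S t)) :=
  energy_decay_neumann_box_general a b hab Ω hΩ K hK α β c hcnn d hd U hU hKU S hS hpde hneumann
end

section
/- Let Ω ⊆ ℝ^d be bounded and open, let α, β > 0, let c : ℝ → ℝ be continuous with c ≥ 0, and let d : ℝ → ℝ be continuously differentiable. Let V be a finite-dimensional linear subspace of the space of functions ℝ^d → ℝ all of whose elements are continuously differentiable on ℝ^d. Let S : ℝ → V be a continuously differentiable curve (with respect to the canonical finite-dimensional topology on V, and with derivative S'(t) ∈ V) such that for all t ∈ ℝ and all v ∈ V: ∫_Ω [ c(|∇S(t)(x)|) S'(t)(x) v(x) + α ∇S(t)(x)·∇v(x) + β d'(S(t)(x)) v(x) ] dx = 0. Then t ↦ E(S(t)) is differentiable with derivative d/dt E(S(t)) = − ∫_Ω c(|∇S(t)(x)|) |S'(t)(x)|² dx ≤ 0. -/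
/-!
Differentiating under the integral sign gives
`d/dt E(S t) = ∫_Ω α ⟪∇S t, ∇S' t⟫ + β d'(S t) S' t`, and testing the variational identity with
`v = S' t ∈ V` turns this into `-∫_Ω c(|∇S t|) (S' t)²`, which is `≤ 0` because `c ≥ 0`.

The regularity needed for the differentiation comes from finite dimensionality: on `V` the
topology of pointwise convergence is the canonical one, so every linear map on `V`, such as
`v ↦ ∇v x`, is continuous. Hence pointwise differentiability of `S` transfers to `∇S`, and
`(v, x) ↦ ∇v x` is jointly continuous, so the `t`-derivative of the integrand is bounded on
`[t - 1, t + 1] × closure Ω`.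
-/

open MeasureTheory Set
open scoped RealInnerProductSpace

open Filter Topology

section ParametricIntegral

variable {X E : Type*} [TopologicalSpace X] [MeasurableSpace X] [OpensMeasurableSpace X]
  [NormedAddCommGroup E] {μ : Measure X} [IsFiniteMeasureOnCompacts μ]
  {Ω : Set X}

theorem Continuous.integrableOn_of_isCompact_closure {f : X → E} (hf : Continuous f)
    (hΩ : IsCompact (closure Ω)) : IntegrableOn f Ω μ :=
  (hf.continuousOn.integrableOn_compact' hΩ isClosed_closure.measurableSet).mono_set
    subset_closure

theorem hasDerivAt_setIntegral_of_continuous [NormedSpace ℝ E] [SecondCountableTopologyEither X E]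
    (hΩ : IsCompact (closure Ω)) {F F' : ℝ → X → E} (hF : ∀ s, Continuous (F s))
    (hF' : Continuous fun p : ℝ × X => F' p.1 p.2)
    (hderiv : ∀ x s, HasDerivAt (F · x) (F' s x) s) (t : ℝ) :
    HasDerivAt (fun s => ∫ x in Ω, F s x ∂μ) (∫ x in Ω, F' t x ∂μ) t := by
  obtain ⟨C, hC⟩ := ((isCompact_closedBall t 1).prod hΩ).exists_bound_of_continuousOn
    hF'.continuousOn
  have hbound : ∀ᵐ x ∂μ.restrict Ω, ∀ s ∈ Metric.ball t 1, ‖F' s x‖ ≤ C :=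
    ae_restrict_of_ae_restrict_of_subset subset_closure <|
      ae_restrict_of_forall_mem isClosed_closure.measurableSet fun x hx s hs =>
        hC (s, x) ⟨Metric.ball_subset_closedBall hs, hx⟩
  have hF't : Continuous (F' t) := hF'.comp (Continuous.prodMk_right t)
  exact (hasDerivAt_integral_of_dominated_loc_of_deriv_le (Metric.ball_mem_nhds t one_pos)
    (.of_forall fun s => (hF s).aestronglyMeasurable) ((hF t).integrableOn_of_isCompact_closure hΩ)
    hF't.aestronglyMeasurable hbound
    ((integrableOn_const hΩ.measure_ne_top).mono_set subset_closure)
    (.of_forall fun x s _ => hderiv x s)).2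

end ParametricIntegral

section FiniteDimensional

variable {V F : Type*} [AddCommGroup V] [Module ℝ V] [TopologicalSpace V]
  [IsTopologicalAddGroup V] [ContinuousSMul ℝ V] [T2Space V] [FiniteDimensional ℝ V]
  [NormedAddCommGroup F] [NormedSpace ℝ F]

theorem LinearMap.continuous_uncurry_of_finiteDimensional {X : Type*} [TopologicalSpace X]
    (Φ : V →ₗ[ℝ] X → F) (hΦ : ∀ v, Continuous (Φ v)) :
    Continuous fun p : V × X => Φ p.1 p.2 := by
  let b := Module.finBasis ℝ V
  have hexpand : ∀ p : V × X, Φ p.1 p.2 = ∑ i, b.coord i p.1 • Φ (b i) p.2 := fun p => by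
    conv_lhs => rw [← b.sum_repr p.1]
    simp only [map_sum, map_smul, Finset.sum_apply, Pi.smul_apply, Module.Basis.coord_apply]
  simp_rw [hexpand]
  exact continuous_finsetSum _ fun i _ =>
    ((b.coord i).continuous_of_finiteDimensional.comp continuous_fst).smul
      ((hΦ (b i)).comp continuous_snd)

end FiniteDimensional

section FunctionSpace

variable {X : Type*} {V : Submodule ℝ (X → ℝ)}

theorem Submodule.continuous_of_forall_continuous_apply {Y : Type*} [TopologicalSpace Y]
    {γ : Y → V} (hγ : ∀ x, Continuous fun y => (γ y : X → ℝ) x) : Continuous γ :=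
  continuous_induced_rng.2 (continuous_pi hγ)

theorem LinearMap.hasDerivAt_comp_of_forall_hasDerivAt_apply [FiniteDimensional ℝ V] {F : Type*}
    [NormedAddCommGroup F] [NormedSpace ℝ F] (L : V →ₗ[ℝ] F) {γ : ℝ → V} {v : V} {t : ℝ}
    (hγ : ∀ x, HasDerivAt (fun s => (γ s : X → ℝ) x) ((v : X → ℝ) x) t) :
    HasDerivAt (fun s => L (γ s)) (L v) t := by
  have hslope : Tendsto (slope γ t) (𝓝[≠] t) (𝓝 v) := by
    refine tendsto_subtype_rng.2 (tendsto_pi_nhds.2 fun x =>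
      (hγ x).tendsto_slope.congr fun s => ?_)
    simp [slope]
  rw [hasDerivAt_iff_tendsto_slope]
  convert (L.continuous_of_finiteDimensional.tendsto v).comp hslope using 1
  funext s
  exact L.slope_comp γ t s

end FunctionSpace

section Gradient

variable {E : Type*} [NormedAddCommGroup E] [InnerProductSpace ℝ E] [CompleteSpace E]

theorem ContDiff.continuous_gradient {f : E → ℝ} (hf : ContDiff ℝ 1 f) :
    Continuous (gradient f) :=
  (InnerProductSpace.toDual ℝ E).symm.continuous.comp (hf.continuous_fderiv one_ne_zero)

noncomputable def Submodule.gradientₗ (V : Submodule ℝ (E → ℝ))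
    (hV : ∀ f ∈ V, Differentiable ℝ f) : V →ₗ[ℝ] E → E where
  toFun v := gradient (v : E → ℝ)
  map_add' v w := by
    ext x
    simp [gradient, fderiv_add ((hV v v.2) x) ((hV w w.2) x)]
  map_smul' a v := by
    ext x
    simp [gradient, fderiv_const_smul ((hV v v.2) x)]

end Gradient

theorem hasDerivAt_energy_s4 {n : ℕ} {Ω : Set (EuclideanSpace ℝ (Fin n))}
    (hΩ : Bornology.IsBounded Ω) (α β : ℝ) {d : ℝ → ℝ} (hd : ContDiff ℝ 1 d)
    {V : Submodule ℝ (EuclideanSpace ℝ (Fin n) → ℝ)} [FiniteDimensional ℝ V]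
    (hV : ∀ f ∈ V, ContDiff ℝ 1 f) {S S' : ℝ → EuclideanSpace ℝ (Fin n) → ℝ}
    (hSV : ∀ t, S t ∈ V) (hS'V : ∀ t, S' t ∈ V)
    (hS : ∀ x t, HasDerivAt (fun s => S s x) (S' t x) t) (hS' : ∀ x, Continuous fun t => S' t x)
    (t : ℝ) :
    HasDerivAt (fun s => energy Ω α β d (S s))
      (∫ x in Ω, (α * ⟪gradient (S t) x, gradient (S' t) x⟫ + β * deriv d (S t x) * S' t x)) t := by
  let γ : ℝ → V := fun s => ⟨S s, hSV s⟩
  let γ' : ℝ → V := fun s => ⟨S' s, hS'V s⟩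
  let grad := V.gradientₗ fun f hf => (hV f hf).differentiable one_ne_zero
  have hγ : Continuous γ := V.continuous_of_forall_continuous_apply fun x =>
    continuous_iff_continuousAt.2 fun t => (hS x t).continuousAt
  have hγ' : Continuous γ' := V.continuous_of_forall_continuous_apply hS'
  have hgrad : Continuous fun p : V × EuclideanSpace ℝ (Fin n) => grad p.1 p.2 :=
    grad.continuous_uncurry_of_finiteDimensional fun v => (hV v v.2).continuous_gradient
  have hval : Continuous fun p : V × EuclideanSpace ℝ (Fin n) => V.subtype p.1 p.2 :=
    V.subtype.continuous_uncurry_of_finiteDimensional fun v => (hV v v.2).continuous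
  have hgradS : Continuous fun p : ℝ × _ => gradient (S p.1) p.2 :=
    hgrad.comp (hγ.prodMap continuous_id)
  have hgradS' : Continuous fun p : ℝ × _ => gradient (S' p.1) p.2 :=
    hgrad.comp (hγ'.prodMap continuous_id)
  have hvalS : Continuous fun p : ℝ × _ => S p.1 p.2 := hval.comp (hγ.prodMap continuous_id)
  have hvalS' : Continuous fun p : ℝ × _ => S' p.1 p.2 := hval.comp (hγ'.prodMap continuous_id)
  have hdc := hd.continuous_deriv le_rfl
  unfold energy
  refine hasDerivAt_setIntegral_of_continuous (μ := volume) hΩ.isCompact_closure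
    (F' := fun s x => α * ⟪gradient (S s) x, gradient (S' s) x⟫ + β * deriv d (S s x) * S' s x)
    (fun s => ?_) ?_ (fun x s => ?_) t
  · have hgradSs := hgradS.comp (Continuous.prodMk_right s)
    have hSs := hvalS.comp (Continuous.prodMk_right s)
    fun_prop
  · fun_prop
  · have hgrad_deriv : HasDerivAt (fun s => gradient (S s) x) (gradient (S' s) x) s :=
      ((LinearMap.proj x).comp grad).hasDerivAt_comp_of_forall_hasDerivAt_apply
        (γ := γ) (v := γ' s) fun y => hS y s
    have hd_deriv : HasDerivAt (fun s => d (S s x)) (deriv d (S s x) * S' s x) s :=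
      (hd.differentiable one_ne_zero _).hasDerivAt.comp s (hS x s)
    exact ((hgrad_deriv.norm_sq.const_mul (α / 2)).fun_add (hd_deriv.const_mul β)).congr_deriv
      (by ring)

theorem energy_decay_galerkin_general
    {n : ℕ} (Ω : Set (EuclideanSpace ℝ (Fin n)))
    (hΩb : Bornology.IsBounded Ω)
    (α β : ℝ)
    (c : ℝ → ℝ) (hc : Continuous c) (hcnn : ∀ x, 0 ≤ c x)
    (d : ℝ → ℝ) (hd : ContDiff ℝ 1 d)
    (V : Submodule ℝ (EuclideanSpace ℝ (Fin n) → ℝ))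
    (hVfin : FiniteDimensional ℝ V)
    (hVsmooth : ∀ f ∈ V, ContDiff ℝ 1 f)
    (S S' : ℝ → EuclideanSpace ℝ (Fin n) → ℝ)
    (hSV : ∀ t, S t ∈ V) (hS'V : ∀ t, S' t ∈ V)
    (hSderiv : ∀ x, ∀ t : ℝ, HasDerivAt (fun s => S s x) (S' t x) t)
    (hS'cont : ∀ x, Continuous (fun t => S' t x))
    (hvar : ∀ t : ℝ, ∀ v ∈ V,
      ∫ x in Ω, (c ‖gradient (S t) x‖ * S' t x * v x
        + α * ⟪gradient (S t) x, gradient v x⟫ + β * deriv d (S t x) * v x) = 0) :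
    ∀ t : ℝ, HasDerivAt (fun s => energy Ω α β d (S s))
        (-∫ x in Ω, c ‖gradient (S t) x‖ * (S' t x) ^ 2) t ∧
      -∫ x in Ω, c ‖gradient (S t) x‖ * (S' t x) ^ 2 ≤ 0 := by
  intro t
  have hSt := hVsmooth _ (hSV t)
  have hS't := hVsmooth _ (hS'V t)
  have hgradS := hSt.continuous_gradient
  have hgradS' := hS't.continuous_gradient
  have hSc := hSt.continuous
  have hS'c := hS't.continuous
  have hdc := hd.continuous_deriv le_rfl
  have hdissipation : IntegrableOn (fun x => c ‖gradient (S t) x‖ * S' t x ^ 2) Ω :=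
    Continuous.integrableOn_of_isCompact_closure (by fun_prop) hΩb.isCompact_closure
  have hrate : IntegrableOn (fun x => α * ⟪gradient (S t) x, gradient (S' t) x⟫
      + β * deriv d (S t x) * S' t x) Ω :=
    Continuous.integrableOn_of_isCompact_closure (by fun_prop) hΩb.isCompact_closure
  have hbalance : (∫ x in Ω, c ‖gradient (S t) x‖ * S' t x ^ 2) + ∫ x in Ω,
      (α * ⟪gradient (S t) x, gradient (S' t) x⟫ + β * deriv d (S t x) * S' t x) = 0 := by
    rw [← integral_add hdissipation hrate, ← hvar t (S' t) (hS'V t)]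
    congr 1 with x
    ring
  refine ⟨(hasDerivAt_energy_s4 hΩb α β hd hVsmooth hSV hS'V hSderiv hS'cont t).congr_deriv
    (by linarith), neg_nonpos.2 (integral_nonneg fun x => mul_nonneg (hcnn _) (sq_nonneg _))⟩

/-- energy decay for the Galerkin semi-discretization, Lemma 3.1:
if `S : ℝ → V` is a continuously differentiable curve in a finite-dimensional subspace `V`
of `C¹` functions (differentiability and continuity of the derivative are expressed
pointwise in `x`, which is equivalent to the corresponding statement in the canonical
finite-dimensional topology of `V` since evaluation functionals separate points of `V`),
satisfying the semi-discrete variational identity for all `v ∈ V`, then `t ↦ E(S(t))` is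
differentiable with derivative `−∫_Ω c(|∇S(t)|)|S'(t)|² dx ≤ 0`. -/
theorem energy_decay_galerkin
    {n : ℕ} (Ω : Set (EuclideanSpace ℝ (Fin n)))
    (hΩb : Bornology.IsBounded Ω) (hΩo : IsOpen Ω)
    (α β : ℝ) (hα : 0 < α) (hβ : 0 < β)
    (c : ℝ → ℝ) (hc : Continuous c) (hcnn : ∀ x, 0 ≤ c x)
    (d : ℝ → ℝ) (hd : ContDiff ℝ 1 d)
    (V : Submodule ℝ (EuclideanSpace ℝ (Fin n) → ℝ))
    (hVfin : FiniteDimensional ℝ V)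
    (hVsmooth : ∀ f ∈ V, ContDiff ℝ 1 f)
    (S S' : ℝ → EuclideanSpace ℝ (Fin n) → ℝ)
    (hSV : ∀ t, S t ∈ V) (hS'V : ∀ t, S' t ∈ V)
    (hSderiv : ∀ x, ∀ t : ℝ, HasDerivAt (fun s => S s x) (S' t x) t)
    (hS'cont : ∀ x, Continuous (fun t => S' t x))
    (hvar : ∀ t : ℝ, ∀ v ∈ V,
      ∫ x in Ω, (c ‖gradient (S t) x‖ * S' t x * v x
        + α * ⟪gradient (S t) x, gradient v x⟫ + β * deriv d (S t x) * v x) = 0) :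
    ∀ t : ℝ, HasDerivAt (fun s => energy Ω α β d (S s))
        (-∫ x in Ω, c ‖gradient (S t) x‖ * (S' t x) ^ 2) t ∧
      -∫ x in Ω, c ‖gradient (S t) x‖ * (S' t x) ^ 2 ≤ 0 :=
  energy_decay_galerkin_general Ω hΩb α β c hc hcnn d hd V hVfin hVsmooth S S' hSV hS'V hSderiv
    hS'cont hvar
end

section
/- Let Ω ⊆ ℝ^d be bounded and open, let α, β, τ > 0, let c : ℝ → ℝ be measurable with 0 ≤ c̲ ≤ c(x) ≤ c̄ for all x, and let d : ℝ → ℝ be differentiable with d ≥ 0. Let S, R : ℝ^d → ℝ be differentiable on Ω with |∇S|² and |∇R|² integrable on Ω, with d∘S and d∘R integrable on Ω, and with (S − R)² integrable on Ω. Suppose the discrete variational identity tested with v = S − R holds: ∫_Ω [ c(|∇R(x)|) τ⁻¹ (S(x) − R(x)) (S(x) − R(x)) + α ∇S(x)·(∇S(x) − ∇R(x)) + β D(S(x), R(x)) (S(x) − R(x)) ] dx = 0. Then E(S) − E(R) = − τ ∫_Ω c(|∇R(x)|) |τ⁻¹(S(x) − R(x))|² dx − (α/2) ∫_Ω |∇S(x)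 − ∇R(x)|² dx, and in particular E(S) ≤ E(R). -/
open MeasureTheory Set
open scoped RealInnerProductSpace

/-- The difference quotient `D(a,b) = (d(a) − d(b))/(a − b)` of a differentiable
function `d`, with `D(a,a) = d'(a)`. -/
noncomputable def diffQuot (d : ℝ → ℝ) (a b : ℝ) : ℝ :=
  if a = b then deriv d a else (d a - d b) / (a - b)

lemma diffQuot_mul_sub (d : ℝ → ℝ) (a b : ℝ) :
    diffQuot d a b * (a - b) = d a - d b := by
  unfold diffQuot
  by_cases h : a = b
  · simp [h]
  · rw [if_neg h, div_mul_cancel₀]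
    exact sub_ne_zero.mpr h

/-- fully discrete energy decay, Lemma 4.1: if the discrete variational
identity of the implicit time-stepping scheme, tested with `v = S − R`, holds, then
`E(S) − E(R) = −τ ∫_Ω c(|∇R|)|τ⁻¹(S − R)|² dx − (α/2) ∫_Ω |∇S − ∇R|² dx`, and in
particular `E(S) ≤ E(R)`. -/
theorem discrete_energy_decay
    {n : ℕ} (Ω : Set (EuclideanSpace ℝ (Fin n)))
    (hΩb : Bornology.IsBounded Ω) (hΩo : IsOpen Ω)
    (α β τ : ℝ) (hα : 0 < α) (hβ : 0 < β) (hτ : 0 < τ)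
    (c : ℝ → ℝ) (hcmeas : Measurable c)
    (cl cu : ℝ) (hcl : 0 ≤ cl) (hcbound : ∀ x, cl ≤ c x ∧ c x ≤ cu)
    (d : ℝ → ℝ) (hd : Differentiable ℝ d) (hdnn : ∀ x, 0 ≤ d x)
    (S R : EuclideanSpace ℝ (Fin n) → ℝ)
    (hSdiff : DifferentiableOn ℝ S Ω) (hRdiff : DifferentiableOn ℝ R Ω)
    (hSgradint : IntegrableOn (fun x => ‖gradient S x‖ ^ 2) Ω)
    (hRgradint : IntegrableOn (fun x => ‖gradient R x‖ ^ 2) Ω)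
    (hdSint : IntegrableOn (fun x => d (S x)) Ω)
    (hdRint : IntegrableOn (fun x => d (R x)) Ω)
    (hSRint : IntegrableOn (fun x => (S x - R x) ^ 2) Ω)
    (hvar : ∫ x in Ω, (c ‖gradient R x‖ * τ⁻¹ * (S x - R x) * (S x - R x)
      + α * ⟪gradient S x, gradient S x - gradient R x⟫
      + β * diffQuot d (S x) (R x) * (S x - R x)) = 0) :
    energy Ω α β d S - energy Ω α β d R
      = -(τ * ∫ x in Ω, c ‖gradient R x‖ * (τ⁻¹ * (S x - R x)) ^ 2)
        - α / 2 * ∫ x in Ω, ‖gradient S x - gradient R x‖ ^ 2 ∧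
    energy Ω α β d S ≤ energy Ω α β d R := by
  have hτ' : τ ≠ 0 := ne_of_gt hτ
  have hmgS : Measurable (gradient S) :=
    ((InnerProductSpace.toDual ℝ
      (EuclideanSpace ℝ (Fin n))).symm.continuous.measurable).comp (measurable_fderiv ℝ S)
  have hmgR : Measurable (gradient R) :=
    ((InnerProductSpace.toDual ℝ
      (EuclideanSpace ℝ (Fin n))).symm.continuous.measurable).comp (measurable_fderiv ℝ R)
  set g1 : EuclideanSpace ℝ (Fin n) → ℝ :=
    fun x => c ‖gradient R x‖ * (τ⁻¹ * (S x - R x)) ^ 2 with hg1def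
  set g2 : EuclideanSpace ℝ (Fin n) → ℝ :=
    fun x => ‖gradient S x - gradient R x‖ ^ 2 with hg2def
  set eS : EuclideanSpace ℝ (Fin n) → ℝ :=
    fun x => α / 2 * ‖gradient S x‖ ^ 2 + β * d (S x) with heSdef
  set eR : EuclideanSpace ℝ (Fin n) → ℝ :=
    fun x => α / 2 * ‖gradient R x‖ ^ 2 + β * d (R x) with heRdef
  have hcnn : ∀ y, 0 ≤ c y := fun y => le_trans hcl (hcbound y).1
  -- integrability of g1
  have hg1 : IntegrableOn g1 Ω := by
    apply Integrable.mono' (hSRint.const_mul (cu * τ⁻¹ ^ 2))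
    · exact AEStronglyMeasurable.mul
        ((hcmeas.comp hmgR.norm).aestronglyMeasurable)
        ((hSRint.aestronglyMeasurable.const_mul (τ⁻¹ ^ 2)).congr
          (Filter.Eventually.of_forall fun x => by ring))
    · refine Filter.Eventually.of_forall fun x => ?_
      have h1 : 0 ≤ g1 x := mul_nonneg (hcnn _) (sq_nonneg _)
      rw [Real.norm_eq_abs, abs_of_nonneg h1]
      have h2 := (hcbound ‖gradient R x‖).2
      have h3 : (0:ℝ) ≤ (S x - R x) ^ 2 := sq_nonneg _
      simp only [hg1def]
      nlinarith [sq_nonneg (τ⁻¹ * (S x - R x)), sq_nonneg τ⁻¹]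
  -- integrability of g2
  have hg2 : IntegrableOn g2 Ω := by
    apply Integrable.mono' ((hSgradint.const_mul 2).add (hRgradint.const_mul 2))
    · exact (((hmgS.sub hmgR).norm.pow_const 2).aestronglyMeasurable)
    · refine Filter.Eventually.of_forall fun x => ?_
      simp only [hg2def, Pi.add_apply, Real.norm_eq_abs]
      rw [abs_of_nonneg (sq_nonneg _)]
      have h1 : ‖gradient S x - gradient R x‖ ≤ ‖gradient S x‖ + ‖gradient R x‖ :=
        norm_sub_le _ _
      have h2 : ‖gradient S x - gradient R x‖ ^ 2
          ≤ (‖gradient S x‖ + ‖gradient R x‖) ^ 2 :=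
        pow_le_pow_left₀ (norm_nonneg _) h1 2
      nlinarith [sq_nonneg (‖gradient S x‖ - ‖gradient R x‖)]
  have heS : IntegrableOn eS Ω := (hSgradint.const_mul (α / 2)).add (hdSint.const_mul β)
  have heR : IntegrableOn eR Ω := (hRgradint.const_mul (α / 2)).add (hdRint.const_mul β)
  -- pointwise identity
  have hpt : ∀ x, c ‖gradient R x‖ * τ⁻¹ * (S x - R x) * (S x - R x)
      + α * ⟪gradient S x, gradient S x - gradient R x⟫
      + β * diffQuot d (S x) (R x) * (S x - R x)
      = τ * g1 x + (eS x - eR x) + α / 2 * g2 x := by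
    intro x
    have hin : ⟪gradient S x, gradient S x - gradient R x⟫
        = ‖gradient S x‖ ^ 2 - ⟪gradient S x, gradient R x⟫ := by
      rw [inner_sub_right, real_inner_self_eq_norm_sq]
    have hns : ‖gradient S x - gradient R x‖ ^ 2
        = ‖gradient S x‖ ^ 2 - 2 * ⟪gradient S x, gradient R x⟫ + ‖gradient R x‖ ^ 2 :=
      norm_sub_sq_real _ _
    have hdq : diffQuot d (S x) (R x) * (S x - R x) = d (S x) - d (R x) :=
      diffQuot_mul_sub d _ _
    simp only [hg1def, hg2def, heSdef, heRdef, hin, hns]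
    rw [mul_assoc β, hdq]
    field_simp
    ring
  have hvar' : ∫ x in Ω, (τ * g1 x + (eS x - eR x) + α / 2 * g2 x) = 0 := by
    rw [← hvar]
    exact integral_congr_ae (Filter.Eventually.of_forall fun x => (hpt x).symm)
  have hA : Integrable (fun x => τ * g1 x + (eS x - eR x)) (volume.restrict Ω) :=
    (hg1.const_mul τ).add (heS.sub heR)
  have hB : Integrable (fun x => eS x - eR x) (volume.restrict Ω) := heS.sub heR
  rw [integral_add hA (hg2.const_mul (α / 2)),
    integral_add (hg1.const_mul τ) hB, integral_sub heS heR,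
    integral_const_mul, integral_const_mul] at hvar'
  have henergyS : energy Ω α β d S = ∫ x in Ω, eS x := rfl
  have henergyR : energy Ω α β d R = ∫ x in Ω, eR x := rfl
  have hg1nn : 0 ≤ ∫ x in Ω, g1 x :=
    setIntegral_nonneg hΩo.measurableSet fun x _ => mul_nonneg (hcnn _) (sq_nonneg _)
  have hg2nn : 0 ≤ ∫ x in Ω, g2 x :=
    setIntegral_nonneg hΩo.measurableSet fun x _ => sq_nonneg _
  constructor
  · rw [henergyS, henergyR]; linarith
  · rw [henergyS, henergyR]
    nlinarith [mul_nonneg (le_of_lt hτ) hg1nn, mul_nonneg (le_of_lt (half_pos hα)) hg2nn]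
end
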